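/- arXiv:1607.02468 — 5 statements merged into one kernel-verified Lean document; each statement's English description precedes it below -/
import Mathlib

section
/- Let N be a natural number and p a real number with 1 < p < N, let 0 < a < b be reals, set α = (N-p)/(p-1), A = (ab)^α/(b^α - a^α), B = b^α/(b^α - a^α), t(r) = B - A/r^α for r ∈ (a,b), and q(t) = ((p-1)/(N-p))^p · A^{p(p-1)/(N-p)}/(B-t)^{p(N-1)/(N-p)}. Let f : ℝ → ℝ be continuous and let v : ℝ → ℝ be differentiable on (0,1) such that the function φ(s) = |v'(s)|^{p-2} v'(s) is differentiable on (0,1) with φ'(s) = -q(s) f(v(s)) for all s ∈ (0,1). Define u : (a,b) → ℝ by u(r) = v(t(r)). Then u is differentiable on (a,b), the function r ↦ r^{N-1} |u'(r)|^{p-2} u'(r) is differentiable on (a,b), and its derivative equals -r^{N-1} f(u(r)) for every r ∈ (a,b). -/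
/-!
The substitution `t(r) = B - A r^(-α)` has `t' = αA r^(-(α+1))`, and `(α+1)(p-1) = N-1` makes the
radial weight disappear: by the chain rule `r^(N-1) φ_p(u'(r)) = (αA)^(p-1) φ_p(v'(t(r)))` near
each `r ∈ (a,b)`, where `φ_p(s) = |s|^(p-2) s`. Differentiating the right-hand side brings in
`t'(r) q(t(r))`, and `q(t(r)) = (αA)^(-p) r^(p(α+1))` is exactly what turns this into `r^(N-1)`.
The values `t(a) = 0` and `t(b) = 1` make `t` map `(a,b)` into `(0,1)`.
-/

open Real Set Filter Topology

noncomputable def signedPow (p x : ℝ) : ℝ := |x| ^ (p - 2) * x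

lemma signedPow_mul_of_pos (p x : ℝ) {w : ℝ} (hw : 0 < w) :
    signedPow p (x * w) = w ^ (p - 1) * signedPow p x := by
  have hw' : w ^ (p - 2) * w = w ^ (p - 1) := by
    rw [← rpow_add_one hw.ne']; ring_nf
  simp only [signedPow]
  rw [abs_mul, abs_of_pos hw, mul_rpow (abs_nonneg x) hw.le, ← hw']
  ring

lemma hasDerivAt_const_sub_div_rpow (A B : ℝ) {α r : ℝ} (hr : 0 < r) :
    HasDerivAt (fun r => B - A / r ^ α) (α * A * r ^ (-(α + 1))) r := by
  have hrα : r ^ α ≠ 0 := (rpow_pos_of_pos hr α).ne'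
  refine (((hasDerivAt_const r A).div (hasDerivAt_rpow_const (Or.inl hr.ne')) hrα).const_sub B
    ).congr_deriv ?_
  rw [rpow_neg hr.le, rpow_add hr, rpow_sub hr, rpow_one]
  field_simp
  ring

lemma mapsTo_Ioo_const_sub_div_rpow {a b α : ℝ} (ha : 0 < a) (hab : a < b) (hα : 0 < α) :
    MapsTo (fun r => b ^ α / (b ^ α - a ^ α) - (a * b) ^ α / (b ^ α - a ^ α) / r ^ α)
      (Ioo a b) (Ioo 0 1) := by
  intro r ⟨har, hrb⟩
  have hr : 0 < r := ha.trans har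
  have haα := rpow_pos_of_pos ha α
  have hrα := rpow_pos_of_pos hr α
  have hden : 0 < b ^ α - a ^ α := sub_pos.2 (rpow_lt_rpow ha.le hab hα)
  have har' := rpow_lt_rpow ha.le har hα
  have hrb' := rpow_lt_rpow hr.le hrb hα
  have hform : b ^ α / (b ^ α - a ^ α) - (a * b) ^ α / (b ^ α - a ^ α) / r ^ α
      = b ^ α * (r ^ α - a ^ α) / ((b ^ α - a ^ α) * r ^ α) := by
    rw [mul_rpow ha.le (ha.trans hab).le]; field_simp
  simp only [mem_Ioo, hform]
  constructor
  · exact div_pos (mul_pos (haα.trans (har'.trans hrb')) (sub_pos.2 har')) (mul_pos hden hrα)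
  · rw [div_lt_one (by positivity)]
    nlinarith [mul_lt_mul_of_pos_left hrb' haα]

lemma rpow_mul_signedPow_mul_rpow {x c α p γ : ℝ} (d : ℝ) (hx : 0 < x) (hc : 0 < c)
    (hγ : (α + 1) * (p - 1) = γ) :
    x ^ γ * signedPow p (d * (c * x ^ (-(α + 1)))) = c ^ (p - 1) * signedPow p d := by
  rw [signedPow_mul_of_pos _ _ (mul_pos hc (rpow_pos_of_pos hx _)),
    mul_rpow hc.le (rpow_nonneg hx.le _), ← rpow_mul hx.le]
  have hx1 : x ^ γ * x ^ (-(α + 1) * (p - 1)) = 1 := by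
    rw [← rpow_add hx, ← hγ]; ring_nf; exact rpow_zero x
  linear_combination c ^ (p - 1) * signedPow p d * hx1

theorem hasDerivAt_rpow_mul_signedPow_deriv_comp {t v : ℝ → ℝ} {U : Set ℝ} (hU : IsOpen U)
    (hUpos : U ⊆ Ioi 0) {c α p γ g' r : ℝ} (hc : 0 < c) (hγ : (α + 1) * (p - 1) = γ)
    (ht : ∀ x ∈ U, HasDerivAt t (c * x ^ (-(α + 1))) x)
    (hv : ∀ x ∈ U, DifferentiableAt ℝ v (t x))
    (hφ : HasDerivAt (fun s => signedPow p (deriv v s)) g' (t r)) (hr : r ∈ U) :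
    HasDerivAt (fun x => x ^ γ * signedPow p (deriv (v ∘ t) x))
      (c ^ p * r ^ (-(α + 1)) * g') r := by
  have hEq : (fun x => x ^ γ * signedPow p (deriv (v ∘ t) x))
      =ᶠ[𝓝 r] fun x => c ^ (p - 1) * signedPow p (deriv v (t x)) := by
    filter_upwards [hU.mem_nhds hr] with x hx
    rw [((hv x hx).hasDerivAt.comp x (ht x hx)).deriv,
      rpow_mul_signedPow_mul_rpow _ (hUpos hx) hc hγ]
  refine (((hφ.comp r (ht r hr)).const_mul (c ^ (p - 1))).congr_of_eventuallyEq hEq).congr_deriv ?_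
  rw [rpow_sub_one hc.ne']
  field_simp

noncomputable def annulusWeight (N p A B t : ℝ) : ℝ :=
  ((p - 1) / (N - p)) ^ p * A ^ (p * (p - 1) / (N - p)) / (B - t) ^ (p * (N - 1) / (N - p))

lemma annulusWeight_const_sub_div_rpow {N p α A r : ℝ} (B : ℝ) (hp : 1 < p) (hpN : p < N)
    (hα : α = (N - p) / (p - 1)) (hA : 0 < A) (hr : 0 < r) :
    annulusWeight N p A B (B - A / r ^ α) = (α * A) ^ (-p) * r ^ (p * (α + 1)) := by
  have hp1 : p - 1 ≠ 0 := by linarith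
  have hNp : N - p ≠ 0 := by linarith
  have hα0 : 0 < α := by rw [hα]; exact div_pos (by linarith) (by linarith)
  have e0 : (p - 1) / (N - p) = α⁻¹ := by rw [hα, inv_div]
  have e1 : p * (p - 1) / (N - p) = p / α := by rw [hα]; field_simp
  have e2 : p * (N - 1) / (N - p) = p / α + p := by rw [hα]; field_simp; ring
  have hBt : B - (B - A / r ^ α) = A * (r ^ α)⁻¹ := by ring
  rw [annulusWeight, e0, e1, e2, hBt, inv_rpow hα0.le,
    mul_rpow hA.le (inv_nonneg.2 (rpow_nonneg hr.le _)), rpow_add hA, inv_rpow (rpow_nonneg hr.le _),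
    ← rpow_mul hr.le, mul_rpow hα0.le hA.le, rpow_neg hα0.le, rpow_neg hA.le]
  have hpow : α * (p / α + p) = p * (α + 1) := by field_simp; ring
  have hApow : A ^ (p / α) ≠ 0 := (rpow_pos_of_pos hA _).ne'
  rw [hpow]
  field_simp

theorem stmt_6_general (N : ℕ) (p a b α A B : ℝ) (hp : 1 < p) (hpN : p < (N : ℝ))
    (ha : 0 < a) (hab : a < b)
    (hα : α = ((N : ℝ) - p) / (p - 1))
    (hA : A = (a * b) ^ α / (b ^ α - a ^ α))
    (hB : B = b ^ α / (b ^ α - a ^ α))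
    (tmap q f v u : ℝ → ℝ)
    (htmap : ∀ r, tmap r = B - A / r ^ α)
    (hq : ∀ t, q t = ((p - 1) / ((N : ℝ) - p)) ^ p * A ^ (p * (p - 1) / ((N : ℝ) - p))
      / (B - t) ^ (p * ((N : ℝ) - 1) / ((N : ℝ) - p)))
    (hv : ∀ s ∈ Set.Ioo (0 : ℝ) 1, DifferentiableAt ℝ v s)
    (hφ : ∀ s ∈ Set.Ioo (0 : ℝ) 1,
      HasDerivAt (fun s => |deriv v s| ^ (p - 2) * deriv v s) (-q s * f (v s)) s)
    (hu : ∀ r, u r = v (tmap r)) :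
    (∀ r ∈ Set.Ioo a b, DifferentiableAt ℝ u r) ∧
    ∀ r ∈ Set.Ioo a b,
      HasDerivAt (fun r => r ^ ((N : ℝ) - 1) * (|deriv u r| ^ (p - 2) * deriv u r))
        (-(r ^ ((N : ℝ) - 1)) * f (u r)) r := by
  have hα0 : 0 < α := by rw [hα]; exact div_pos (by linarith) (by linarith)
  have hA0 : 0 < A := by
    rw [hA]
    exact div_pos (rpow_pos_of_pos (mul_pos ha (ha.trans hab)) α)
      (sub_pos.2 (rpow_lt_rpow ha.le hab hα0))
  have hpos : Ioo a b ⊆ Ioi 0 := fun r hr => ha.trans hr.1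
  have htmap' : tmap = fun r => B - A / r ^ α := funext htmap
  have ht : ∀ r ∈ Ioo a b, HasDerivAt tmap (α * A * r ^ (-(α + 1))) r := fun r hr =>
    htmap' ▸ hasDerivAt_const_sub_div_rpow A B (hpos hr)
  have hmaps : MapsTo tmap (Ioo a b) (Ioo 0 1) := by
    rw [htmap', hA, hB]; exact mapsTo_Ioo_const_sub_div_rpow ha hab hα0
  have hvt : ∀ r ∈ Ioo a b, DifferentiableAt ℝ v (tmap r) := fun r hr => hv _ (hmaps hr)
  have hu' : u = v ∘ tmap := funext hu
  have hγ : (α + 1) * (p - 1) = N - 1 := by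
    rw [hα, add_mul, div_mul_cancel₀ _ (by linarith)]; ring
  subst hu'
  refine ⟨fun r hr => (hvt r hr).comp r (ht r hr).differentiableAt, fun r hr => ?_⟩
  refine (hasDerivAt_rpow_mul_signedPow_deriv_comp isOpen_Ioo hpos (mul_pos hα0 hA0) hγ ht hvt
    (hφ _ (hmaps hr)) hr).congr_deriv ?_
  have hq' : q = annulusWeight N p A B := funext hq
  have hexp : r ^ (-(α + 1)) * r ^ (p * (α + 1)) = r ^ ((N : ℝ) - 1) := by
    rw [← rpow_add (hpos hr), ← hγ]; ring_nf
  rw [hq', Function.comp_apply, htmap, annulusWeight_const_sub_div_rpow B hp hpN hα hA0 (hpos hr),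
    rpow_neg (mul_pos hα0 hA0).le, ← hexp]
  field_simp

/-- Change of variables for `1 < p < N`. With `α = (N-p)/(p-1)`,
`A = (ab)^α/(b^α-a^α)`, `B = b^α/(b^α-a^α)`, `t(r) = B - A/r^α`, and
`q(t) = ((p-1)/(N-p))^p A^(p(p-1)/(N-p))/(B-t)^(p(N-1)/(N-p))`: if `f` is continuous,
`v` is differentiable on `(0,1)` and `s ↦ |v'(s)|^(p-2) v'(s)` is differentiable on `(0,1)`
with derivative `-q(s) f(v(s))`, then `u(r) = v(t(r))` is differentiable on `(a,b)`,
`r ↦ r^(N-1)|u'(r)|^(p-2)u'(r)` is differentiable on `(a,b)`, and its derivative equals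
`-r^(N-1) f(u(r))` there. -/
theorem stmt_6 (N : ℕ) (p a b α A B : ℝ) (hp : 1 < p) (hpN : p < (N : ℝ))
    (ha : 0 < a) (hab : a < b)
    (hα : α = ((N : ℝ) - p) / (p - 1))
    (hA : A = (a * b) ^ α / (b ^ α - a ^ α))
    (hB : B = b ^ α / (b ^ α - a ^ α))
    (tmap q f v u : ℝ → ℝ)
    (htmap : ∀ r, tmap r = B - A / r ^ α)
    (hq : ∀ t, q t = ((p - 1) / ((N : ℝ) - p)) ^ p * A ^ (p * (p - 1) / ((N : ℝ) - p))
      / (B - t) ^ (p * ((N : ℝ) - 1) / ((N : ℝ) - p)))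
    (hf : Continuous f)
    (hv : ∀ s ∈ Set.Ioo (0 : ℝ) 1, DifferentiableAt ℝ v s)
    (hφ : ∀ s ∈ Set.Ioo (0 : ℝ) 1,
      HasDerivAt (fun s => |deriv v s| ^ (p - 2) * deriv v s) (-q s * f (v s)) s)
    (hu : ∀ r, u r = v (tmap r)) :
    (∀ r ∈ Set.Ioo a b, DifferentiableAt ℝ u r) ∧
    ∀ r ∈ Set.Ioo a b,
      HasDerivAt (fun r => r ^ ((N : ℝ) - 1) * (|deriv u r| ^ (p - 2) * deriv u r))
        (-(r ^ ((N : ℝ) - 1)) * f (u r)) r :=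
  stmt_6_general N p a b α A B hp hpN ha hab hα hA hB tmap q f v u htmap hq hv hφ hu
end

section
/- Let N = p > 1 (p a real number which is the space dimension N), let 0 < a < b be reals, set t(r) = ln(r/a)/ln(b/a) for r ∈ (a,b), and q(t) = (a·(b/a)^t · ln(b/a))^p. Let f : ℝ → ℝ be continuous and let v : ℝ → ℝ be differentiable on (0,1) such that the function φ(s) = |v'(s)|^{p-2} v'(s) is differentiable on (0,1) with φ'(s) = -q(s) f(v(s)) for all s ∈ (0,1). Define u : (a,b) → ℝ by u(r) = v(t(r)). Then u is differentiable on (a,b), the function r ↦ r^{p-1} |u'(r)|^{p-2} u'(r) is differentiable on (a,b), and its derivative equals -r^{p-1} f(u(r)) for every r ∈ (a,b). -/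
/-!
Under `r = a (b/a)^t`, i.e. `t = log (r/a) / L` with `L = log (b/a)`, one has `dt/dr = 1/(r L)`,
so `u'(r) = v'(t)/(r L)`. Since `φ(x) = |x|^(p-2) x` is homogeneous of degree `p - 1`, the weight
`r^(p-1)` cancels and the radial flux `r^(p-1) φ(u')` equals `φ(v'(t)) / L^(p-1)`. Differentiating
in `r` gives `-q(t) f(v(t)) / (r L^p)`, and `q(t) = (r L)^p` turns this into `-r^(p-1) f(u(r))`.
-/

open Real Set Filter Topology

noncomputable def logCoord (a b r : ℝ) : ℝ := log (r / a) / log (b / a)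

section logCoord

variable {a b r : ℝ}

theorem logCoord_mem_Ioo (ha : 0 < a) (hr : r ∈ Ioo a b) : logCoord a b r ∈ Ioo (0 : ℝ) 1 := by
  have hL : 0 < log (b / a) := log_pos ((one_lt_div ha).2 (hr.1.trans hr.2))
  have hlog : log (r / a) < log (b / a) :=
    log_lt_log (div_pos (ha.trans hr.1) ha) (div_lt_div_of_pos_right hr.2 ha)
  exact ⟨div_pos (log_pos ((one_lt_div ha).2 hr.1)) hL, (div_lt_one hL).2 hlog⟩

theorem hasDerivAt_logCoord (ha : a ≠ 0) (hr : r ≠ 0) :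
    HasDerivAt (logCoord a b) (r * log (b / a))⁻¹ r := by
  have hdiv : HasDerivAt (fun x : ℝ => x / a) a⁻¹ r := by
    simpa using (hasDerivAt_id r).div_const a
  refine (((hasDerivAt_log (div_ne_zero hr ha)).comp r hdiv).div_const
    (log (b / a))).congr_deriv ?_
  rw [inv_div, div_mul_eq_mul_div, div_div, mul_inv_cancel₀ ha, one_div]

theorem mul_rpow_logCoord (ha : 0 < a) (hb : 0 < b) (hab : a ≠ b) (hr : 0 < r) :
    a * (b / a) ^ logCoord a b r = r := by
  have hL : log (b / a) ≠ 0 := by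
    refine log_ne_zero_of_pos_of_ne_one (div_pos hb ha) ?_
    rw [ne_eq, div_eq_one_iff_eq ha.ne']
    exact hab.symm
  rw [logCoord, rpow_def_of_pos (div_pos hb ha), mul_div_cancel₀ _ hL,
    exp_log (div_pos hr ha), mul_div_cancel₀ _ ha.ne']

end logCoord

theorem abs_rpow_sub_two_mul_div (p : ℝ) {c : ℝ} (hc : 0 < c) (x : ℝ) :
    |x / c| ^ (p - 2) * (x / c) = |x| ^ (p - 2) * x / c ^ (p - 1) := by
  rcases eq_or_ne x 0 with rfl | hx
  · simp
  · rw [abs_div, abs_of_pos hc, div_rpow (abs_nonneg x) hc.le,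
      show p - 1 = (p - 2) + 1 by ring, rpow_add hc, rpow_one]
    have : c ^ (p - 2) ≠ 0 := (rpow_pos_of_pos hc _).ne'
    field_simp

theorem rpow_sub_one_mul_abs_rpow_sub_two_mul_div {p r L : ℝ} (hr : 0 < r) (hL : 0 < L) (w : ℝ) :
    r ^ (p - 1) * (|w / (r * L)| ^ (p - 2) * (w / (r * L))) = |w| ^ (p - 2) * w / L ^ (p - 1) := by
  rw [abs_rpow_sub_two_mul_div p (mul_pos hr hL), mul_rpow hr.le hL.le]
  have : r ^ (p - 1) ≠ 0 := (rpow_pos_of_pos hr _).ne'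
  field_simp

theorem stmt_7_general (p a b : ℝ) (ha : 0 < a) (hab : a < b)
    (tmap q f v u : ℝ → ℝ)
    (htmap : ∀ r, tmap r = Real.log (r / a) / Real.log (b / a))
    (hq : ∀ t, q t = (a * (b / a) ^ t * Real.log (b / a)) ^ p)
    (hv : ∀ s ∈ Set.Ioo (0 : ℝ) 1, DifferentiableAt ℝ v s)
    (hφ : ∀ s ∈ Set.Ioo (0 : ℝ) 1,
      HasDerivAt (fun s => |deriv v s| ^ (p - 2) * deriv v s) (-q s * f (v s)) s)
    (hu : ∀ r, u r = v (tmap r)) :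
    (∀ r ∈ Set.Ioo a b, DifferentiableAt ℝ u r) ∧
    ∀ r ∈ Set.Ioo a b,
      HasDerivAt (fun r => r ^ (p - 1) * (|deriv u r| ^ (p - 2) * deriv u r))
        (-(r ^ (p - 1)) * f (u r)) r := by
  obtain rfl : tmap = logCoord a b := funext htmap
  obtain rfl : u = fun r => v (logCoord a b r) := funext hu
  set L := log (b / a)
  have hL : 0 < L := log_pos ((one_lt_div ha).2 hab)
  have hu' : ∀ r ∈ Ioo a b,
      HasDerivAt (fun r => v (logCoord a b r)) (deriv v (logCoord a b r) / (r * L)) r :=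
    fun r hr => ((hv _ (logCoord_mem_Ioo ha hr)).hasDerivAt.comp r
      (hasDerivAt_logCoord ha.ne' (ha.trans hr.1).ne')).congr_deriv (div_eq_mul_inv _ _).symm
  refine ⟨fun r hr => (hu' r hr).differentiableAt, fun r hr => ?_⟩
  have hflux : ∀ x ∈ Ioo a b,
      x ^ (p - 1) * (|deriv (fun r => v (logCoord a b r)) x| ^ (p - 2) *
        deriv (fun r => v (logCoord a b r)) x)
        = |deriv v (logCoord a b x)| ^ (p - 2) * deriv v (logCoord a b x) / L ^ (p - 1) :=
    fun x hx => by
      rw [(hu' x hx).deriv]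
      exact rpow_sub_one_mul_abs_rpow_sub_two_mul_div (ha.trans hx.1) hL _
  have hr0 : 0 < r := ha.trans hr.1
  have hweight : (r * L) ^ p * (r * L)⁻¹ / L ^ (p - 1) = r ^ (p - 1) := by
    rw [← div_eq_mul_inv, ← rpow_sub_one (by positivity), mul_rpow hr0.le hL.le,
      mul_div_cancel_right₀ _ (rpow_pos_of_pos hL _).ne']
  have hφt := (hφ _ (logCoord_mem_Ioo ha hr)).comp r (hasDerivAt_logCoord ha.ne' hr0.ne')
  refine ((hφt.div_const (L ^ (p - 1))).congr_of_eventuallyEq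
    (eventually_of_mem (isOpen_Ioo.mem_nhds hr) hflux)).congr_deriv ?_
  rw [hq, mul_rpow_logCoord ha (ha.trans hab) hab.ne hr0, ← hweight]
  ring

/-- Change of variables in the borderline case `N = p > 1`. With
`t(r) = ln(r/a)/ln(b/a)` and `q(t) = (a·(b/a)^t·ln(b/a))^p`: if `f` is continuous, `v` is
differentiable on `(0,1)` and `s ↦ |v'(s)|^(p-2) v'(s)` is differentiable on `(0,1)` with
derivative `-q(s) f(v(s))`, then `u(r) = v(t(r))` is differentiable on `(a,b)`,
`r ↦ r^(p-1)|u'(r)|^(p-2)u'(r)` is differentiable on `(a,b)`, and its derivative equals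
`-r^(p-1) f(u(r))` there. -/
theorem stmt_7 (p a b : ℝ) (hp : 1 < p) (ha : 0 < a) (hab : a < b)
    (tmap q f v u : ℝ → ℝ)
    (htmap : ∀ r, tmap r = Real.log (r / a) / Real.log (b / a))
    (hq : ∀ t, q t = (a * (b / a) ^ t * Real.log (b / a)) ^ p)
    (hf : Continuous f)
    (hv : ∀ s ∈ Set.Ioo (0 : ℝ) 1, DifferentiableAt ℝ v s)
    (hφ : ∀ s ∈ Set.Ioo (0 : ℝ) 1,
      HasDerivAt (fun s => |deriv v s| ^ (p - 2) * deriv v s) (-q s * f (v s)) s)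
    (hu : ∀ r, u r = v (tmap r)) :
    (∀ r ∈ Set.Ioo a b, DifferentiableAt ℝ u r) ∧
    ∀ r ∈ Set.Ioo a b,
      HasDerivAt (fun r => r ^ (p - 1) * (|deriv u r| ^ (p - 2) * deriv u r))
        (-(r ^ (p - 1)) * f (u r)) r :=
  stmt_7_general p a b ha hab tmap q f v u htmap hq hv hφ hu
end

section
/- Let p > 1 be a real number, let f : ℝ → ℝ be continuous, F(ξ) = ∫₀^ξ f(s) ds with F(ξ) ≥ 0 for all ξ ≥ 0, and let q : [0,1] → ℝ be continuous with q(t) ≥ q₀ > 0 for all t ∈ [0,1]. Let t₀ ∈ (0,1), γ > 0 with [t₀-γ, t₀+γ] ⊂ (0,1), μ ∈ (0,1), η > 0, and let w : [0,1] → ℝ be defined by w(t) = 0 if t ∉ (t₀-γ, t₀+γ), w(t) = η if t ∈ (t₀-μγ, t₀+μγ), and w(t) = (η/(γ(1-μ)))(γ - |t-t₀|) otherwise. Then (1/p)∫₀¹ |w'(t)|^p dt - ∫₀¹ q(t) F(w(t)) dt ≤ 2μγ q₀ · ( η^p / (p γ^p q₀ μ (1-μ)^{p-1}) - F(η) ).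 -/
/-!
The tent function is piecewise affine, with slope `±η/(γ(1-μ))` on two intervals of total length
`2γ(1-μ)` and slope `0` elsewhere (off its four corners), so its `p`-energy is computed exactly.
For the potential term, `q F(w) ≥ 0` on `[0,1]` since `0 ≤ w`, and on the plateau `w = η` gives
`q F(w) ≥ q₀ F(η)`; hence `∫ q F(w) ≥ 2μγ q₀ F(η)`.
-/

open MeasureTheory Set

theorem intervalIntegrable_and_integral_eq_of_eqOn_Ioo {f : ℝ → ℝ} {a b d : ℝ} (hab : a ≤ b)
    (hf : EqOn f (fun _ => d) (Ioo a b)) :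
    IntervalIntegrable f volume a b ∧ ∫ t in a..b, f t = (b - a) * d := by
  have hfi : IntegrableOn f (Ioo a b) := (integrableOn_const measure_Ioo_lt_top.ne).congr_fun
    hf.symm measurableSet_Ioo
  refine ⟨(intervalIntegrable_iff_integrableOn_Ioo_of_le hab).2 hfi, ?_⟩
  rw [intervalIntegral.integral_of_le hab, integral_Ioc_eq_integral_Ioo,
    setIntegral_congr_fun measurableSet_Ioo hf, setIntegral_const, Real.volume_real_Ioo_of_le hab,
    smul_eq_mul]

theorem mul_le_intervalIntegral_of_le_on {f : ℝ → ℝ} {a b c d k : ℝ} (hac : a ≤ c) (hcd : c ≤ d)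
    (hdb : d ≤ b) (hfi : IntervalIntegrable f volume a b) (hf0 : ∀ t ∈ Icc a b, 0 ≤ f t)
    (hfk : ∀ t ∈ Icc c d, k ≤ f t) :
    (d - c) * k ≤ ∫ t in a..b, f t := calc
  (d - c) * k = ∫ _ in c..d, k := by simp [mul_comm]
  _ ≤ ∫ t in c..d, f t := intervalIntegral.integral_mono_on hcd intervalIntegrable_const
      (hfi.mono_set (by
        rw [uIcc_of_le hcd, uIcc_of_le (hac.trans (hcd.trans hdb))]
        exact Icc_subset_Icc hac hdb)) hfk
  _ ≤ ∫ t in a..b, f t := intervalIntegral.integral_mono_interval hac hcd hdb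
      ((ae_restrict_iff' measurableSet_Ioc).2
        (ae_of_all _ fun t ht => hf0 t (Ioc_subset_Icc_self ht))) hfi

theorem intervalIntegrable_mul_comp {q F w : ℝ → ℝ} {a b : ℝ} {K : Set ℝ}
    (hq : ContinuousOn q (uIcc a b)) (hF : Continuous F) (hK : IsCompact K)
    (hw : Measurable w) (hwK : ∀ t, w t ∈ K) :
    IntervalIntegrable (fun t => q t * F (w t)) volume a b := by
  obtain ⟨C, hC⟩ := hK.exists_bound_of_continuousOn hF.continuousOn
  refine IntegrableOn.intervalIntegrable ?_
  exact (hq.integrableOn_compact isCompact_uIcc).mul_bdd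
    (hF.measurable.comp hw).aestronglyMeasurable (ae_of_all _ fun t => hC _ (hwK t))

noncomputable def tent (t₀ γ μ η t : ℝ) : ℝ :=
  if t ∈ Ioo (t₀ - γ) (t₀ + γ) then
    if t ∈ Ioo (t₀ - μ * γ) (t₀ + μ * γ) then η else η / (γ * (1 - μ)) * (γ - |t - t₀|)
  else 0

section Tent

variable {t₀ γ μ η : ℝ}

theorem measurable_tent : Measurable (tent t₀ γ μ η) :=
  Measurable.ite measurableSet_Ioo
    (Measurable.ite measurableSet_Ioo measurable_const (by fun_prop)) measurable_const

theorem tent_mem_Icc (hγ : 0 < γ) (hμ1 : μ < 1) (hη : 0 ≤ η) (t : ℝ) :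
    tent t₀ γ μ η t ∈ Icc 0 η := by
  unfold tent
  split_ifs with hout hplat
  · exact ⟨hη, le_rfl⟩
  · rw [mem_Ioo] at hout
    rw [mem_Ioo, not_and_or, not_lt, not_lt] at hplat
    have hγμ : 0 < γ * (1 - μ) := mul_pos hγ (by linarith)
    have habs : |t - t₀| < γ := abs_lt.2 ⟨by linarith, by linarith⟩
    have hμabs : μ * γ ≤ |t - t₀| := by
      rcases hplat with h | h
      · exact le_abs.2 (Or.inr (by linarith))
      · exact le_abs.2 (Or.inl (by linarith))
    rw [div_mul_eq_mul_div, mem_Icc, div_le_iff₀ hγμ]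
    exact ⟨div_nonneg (mul_nonneg hη (by linarith)) hγμ.le, by nlinarith⟩
  · exact ⟨le_rfl, hη⟩

theorem tent_eq_of_mem_Icc (hγ : 0 < γ) (hμ0 : 0 ≤ μ) (hμ1 : μ < 1) {t : ℝ}
    (ht : t ∈ Icc (t₀ - μ * γ) (t₀ + μ * γ)) : tent t₀ γ μ η t = η := by
  have hμγ : μ * γ < γ := by nlinarith
  have hμγ0 : 0 ≤ μ * γ := by positivity
  have hout : t ∈ Ioo (t₀ - γ) (t₀ + γ) := ⟨by linarith [ht.1], by linarith [ht.2]⟩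
  unfold tent
  rw [if_pos hout]
  split_ifs with hplat
  · rfl
  · have habs : |t - t₀| = μ * γ := by
      rw [mem_Ioo, not_and_or, not_lt, not_lt] at hplat
      rcases hplat with h | h
      · rw [abs_of_nonpos (by linarith)]; linarith [ht.1]
      · rw [abs_of_nonneg (by linarith)]; linarith [ht.2]
    have h1μ : 1 - μ ≠ 0 := by linarith
    rw [habs]
    field_simp

theorem deriv_tent_of_notMem_Icc {t : ℝ} (ht : t ∉ Icc (t₀ - γ) (t₀ + γ)) :
    deriv (tent t₀ γ μ η) t = 0 := by
  have hzero : tent t₀ γ μ η =ᶠ[nhds t] fun _ => 0 :=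
    Filter.eventually_of_mem (isClosed_Icc.isOpen_compl.mem_nhds ht) fun s hs =>
      if_neg fun h => hs (Ioo_subset_Icc_self h)
  rw [hzero.deriv_eq, deriv_const]

theorem deriv_tent_of_mem_Ioo_plateau (hμγ : μ * γ ≤ γ) {t : ℝ}
    (ht : t ∈ Ioo (t₀ - μ * γ) (t₀ + μ * γ)) : deriv (tent t₀ γ μ η) t = 0 := by
  have hconst : tent t₀ γ μ η =ᶠ[nhds t] fun _ => η :=
    Filter.eventually_of_mem (isOpen_Ioo.mem_nhds ht) fun s hs => by
      rw [tent, if_pos ⟨by linarith [hs.1], by linarith [hs.2]⟩, if_pos hs]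
  rw [hconst.deriv_eq, deriv_const]

theorem deriv_tent_of_mem_Ioo_left (hμγ : 0 ≤ μ * γ) {t : ℝ}
    (ht : t ∈ Ioo (t₀ - γ) (t₀ - μ * γ)) :
    deriv (tent t₀ γ μ η) t = η / (γ * (1 - μ)) := by
  have haffine : tent t₀ γ μ η =ᶠ[nhds t] fun s => η / (γ * (1 - μ)) * (γ - (t₀ - s)) :=
    Filter.eventually_of_mem (isOpen_Ioo.mem_nhds ht) fun s hs => by
      rw [tent, if_pos ⟨hs.1, by linarith [hs.1, hs.2]⟩, if_neg fun h => h.1.not_gt hs.2,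
        abs_of_neg (by linarith [hs.2]), neg_sub]
  rw [haffine.deriv_eq]
  simp

theorem deriv_tent_of_mem_Ioo_right (hμγ : 0 ≤ μ * γ) {t : ℝ}
    (ht : t ∈ Ioo (t₀ + μ * γ) (t₀ + γ)) :
    deriv (tent t₀ γ μ η) t = -(η / (γ * (1 - μ))) := by
  have haffine : tent t₀ γ μ η =ᶠ[nhds t] fun s => η / (γ * (1 - μ)) * (γ - (s - t₀)) :=
    Filter.eventually_of_mem (isOpen_Ioo.mem_nhds ht) fun s hs => by
      rw [tent, if_pos ⟨by linarith [hs.1, hs.2], hs.2⟩, if_neg fun h => h.2.not_gt hs.1,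
        abs_of_pos (by linarith [hs.1])]
  rw [haffine.deriv_eq]
  simp

theorem integral_abs_deriv_tent_rpow {p a b : ℝ} (hp : 0 < p) (hγ : 0 < γ) (hμ0 : 0 ≤ μ)
    (hμ1 : μ < 1) (ha : a ≤ t₀ - γ) (hb : t₀ + γ ≤ b) :
    ∫ t in a..b, |deriv (tent t₀ γ μ η) t| ^ p
      = 2 * (γ * (1 - μ)) * |η / (γ * (1 - μ))| ^ p := by
  have hμγ0 : 0 ≤ μ * γ := by positivity
  have hμγ : μ * γ ≤ γ := by nlinarith
  have hzero : |(0 : ℝ)| ^ p = 0 := by simp [hp.ne']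
  set f := fun t => |deriv (tent t₀ γ μ η) t| ^ p
  have P₁ := intervalIntegrable_and_integral_eq_of_eqOn_Ioo (f := f) ha fun t ht => by
    simp only [f]; rw [deriv_tent_of_notMem_Icc fun h => ht.2.not_ge h.1, hzero]
  have P₂ := intervalIntegrable_and_integral_eq_of_eqOn_Ioo (f := f)
    (by linarith : t₀ - γ ≤ t₀ - μ * γ) fun t ht => by
      simp only [f]; rw [deriv_tent_of_mem_Ioo_left hμγ0 ht]
  have P₃ := intervalIntegrable_and_integral_eq_of_eqOn_Ioo (f := f)
    (by linarith : t₀ - μ * γ ≤ t₀ + μ * γ) fun t ht => by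
      simp only [f]; rw [deriv_tent_of_mem_Ioo_plateau hμγ ht, hzero]
  have P₄ := intervalIntegrable_and_integral_eq_of_eqOn_Ioo (f := f)
    (by linarith : t₀ + μ * γ ≤ t₀ + γ) fun t ht => by
      simp only [f]; rw [deriv_tent_of_mem_Ioo_right hμγ0 ht, abs_neg]
  have P₅ := intervalIntegrable_and_integral_eq_of_eqOn_Ioo (f := f) hb fun t ht => by
    simp only [f]; rw [deriv_tent_of_notMem_Icc fun h => ht.1.not_ge h.2, hzero]
  open intervalIntegral in
  rw [← integral_add_adjacent_intervals P₁.1 (P₂.1.trans (P₃.1.trans (P₄.1.trans P₅.1))),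
    ← integral_add_adjacent_intervals P₂.1 (P₃.1.trans (P₄.1.trans P₅.1)),
    ← integral_add_adjacent_intervals P₃.1 (P₄.1.trans P₅.1),
    ← integral_add_adjacent_intervals P₄.1 P₅.1, P₁.2, P₂.2, P₃.2, P₄.2, P₅.2]
  ring

end Tent

theorem stmt_12_general (p q₀ t₀ γ μ η : ℝ) (hp : 1 < p)
    (f F q : ℝ → ℝ) (hf : Continuous f)
    (hF : ∀ ξ, F ξ = ∫ s in (0 : ℝ)..ξ, f s)
    (hFpos : ∀ ξ : ℝ, 0 ≤ ξ → 0 ≤ F ξ)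
    (hqc : ContinuousOn q (Set.Icc 0 1))
    (hq₀ : 0 < q₀) (hq : ∀ t ∈ Set.Icc (0 : ℝ) 1, q₀ ≤ q t)
    (hγ : 0 < γ)
    (hsub : Set.Icc (t₀ - γ) (t₀ + γ) ⊆ Set.Ioo (0 : ℝ) 1)
    (hμ : μ ∈ Set.Ioo (0 : ℝ) 1) (hη : 0 < η)
    (w : ℝ → ℝ)
    (hw0 : ∀ t, t ∉ Set.Ioo (t₀ - γ) (t₀ + γ) → w t = 0)
    (hw1 : ∀ t, t ∈ Set.Ioo (t₀ - μ * γ) (t₀ + μ * γ) → w t = η)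
    (hw2 : ∀ t, t ∈ Set.Ioo (t₀ - γ) (t₀ + γ) → t ∉ Set.Ioo (t₀ - μ * γ) (t₀ + μ * γ) →
      w t = (η / (γ * (1 - μ))) * (γ - |t - t₀|)) :
    (1 / p) * (∫ t in (0 : ℝ)..1, |deriv w t| ^ p) - ∫ t in (0 : ℝ)..1, q t * F (w t)
      ≤ 2 * μ * γ * q₀ * (η ^ p / (p * γ ^ p * q₀ * μ * (1 - μ) ^ (p - 1)) - F η) := by
  obtain ⟨hμ0, hμ1⟩ := hμ
  obtain rfl : w = tent t₀ γ μ η := funext fun t => by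
    unfold tent
    split_ifs with hout hplat
    exacts [hw1 t hplat, hw2 t hout hplat, hw0 t hout]
  have h1μ : 0 < 1 - μ := by linarith
  have hμγ : μ * γ ≤ γ := by nlinarith
  have hleft : 0 < t₀ - γ := (hsub ⟨le_rfl, by linarith⟩).1
  have hright : t₀ + γ < 1 := (hsub ⟨by linarith, le_rfl⟩).2
  have hkinetic : (1 / p) * ∫ t in (0 : ℝ)..1, |deriv (tent t₀ γ μ η) t| ^ p
      = 2 * μ * γ * q₀ * (η ^ p / (p * γ ^ p * q₀ * μ * (1 - μ) ^ (p - 1))) := by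
    rw [integral_abs_deriv_tent_rpow (by linarith) hγ hμ0.le hμ1 hleft.le hright.le,
      abs_of_pos (by positivity), Real.div_rpow hη.le (by positivity), Real.mul_rpow hγ.le h1μ.le,
      Real.rpow_sub_one h1μ.ne']
    field_simp
  have hFc : Continuous F := by
    rw [show F = fun ξ => ∫ s in (0 : ℝ)..ξ, f s from funext hF]
    exact intervalIntegral.continuous_primitive (fun a b => hf.intervalIntegrable a b) 0
  have hpotential : (t₀ + μ * γ - (t₀ - μ * γ)) * (q₀ * F η)
      ≤ ∫ t in (0 : ℝ)..1, q t * F (tent t₀ γ μ η t) :=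
    mul_le_intervalIntegral_of_le_on (by linarith) (by nlinarith) (by linarith)
      (intervalIntegrable_mul_comp (by rwa [uIcc_of_le zero_le_one]) hFc isCompact_Icc
        measurable_tent (tent_mem_Icc hγ hμ1 hη.le))
      (fun t ht => mul_nonneg (hq₀.le.trans (hq t ht)) (hFpos _ (tent_mem_Icc hγ hμ1 hη.le t).1))
      fun t ht => by
        rw [tent_eq_of_mem_Icc hγ hμ0.le hμ1 ht]
        exact mul_le_mul_of_nonneg_right (hq t ⟨by linarith [ht.1], by linarith [ht.2]⟩)
          (hFpos η hη.le)
  rw [mul_sub]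
  linarith

/-- Energy estimate for the tent function `w` with plateau of half-width `μγ`
at height `η`: with `F(ξ) = ∫₀^ξ f`, `F ≥ 0` on `[0,∞)`, and `q ≥ q₀ > 0` continuous
on `[0,1]`, one has
`(1/p)∫₀¹|w'|^p - ∫₀¹ q F(w) ≤ 2μγ q₀ (η^p/(p γ^p q₀ μ (1-μ)^(p-1)) - F(η))`. -/
theorem stmt_12 (p q₀ t₀ γ μ η : ℝ) (hp : 1 < p)
    (f F q : ℝ → ℝ) (hf : Continuous f)
    (hF : ∀ ξ, F ξ = ∫ s in (0 : ℝ)..ξ, f s)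
    (hFpos : ∀ ξ : ℝ, 0 ≤ ξ → 0 ≤ F ξ)
    (hqc : ContinuousOn q (Set.Icc 0 1))
    (hq₀ : 0 < q₀) (hq : ∀ t ∈ Set.Icc (0 : ℝ) 1, q₀ ≤ q t)
    (ht₀ : t₀ ∈ Set.Ioo (0 : ℝ) 1) (hγ : 0 < γ)
    (hsub : Set.Icc (t₀ - γ) (t₀ + γ) ⊆ Set.Ioo (0 : ℝ) 1)
    (hμ : μ ∈ Set.Ioo (0 : ℝ) 1) (hη : 0 < η)
    (w : ℝ → ℝ)
    (hw0 : ∀ t, t ∉ Set.Ioo (t₀ - γ) (t₀ + γ) → w t = 0)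
    (hw1 : ∀ t, t ∈ Set.Ioo (t₀ - μ * γ) (t₀ + μ * γ) → w t = η)
    (hw2 : ∀ t, t ∈ Set.Ioo (t₀ - γ) (t₀ + γ) → t ∉ Set.Ioo (t₀ - μ * γ) (t₀ + μ * γ) →
      w t = (η / (γ * (1 - μ))) * (γ - |t - t₀|)) :
    (1 / p) * (∫ t in (0 : ℝ)..1, |deriv w t| ^ p) - ∫ t in (0 : ℝ)..1, q t * F (w t)
      ≤ 2 * μ * γ * q₀ * (η ^ p / (p * γ ^ p * q₀ * μ * (1 - μ) ^ (p - 1)) - F η) :=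
  stmt_12_general p q₀ t₀ γ μ η hp f F q hf hF hFpos hqc hq₀ hq hγ hsub hμ hη w hw0 hw1 hw2
end

section
/- Let p > 1 be a real number, let q : [0,1] → ℝ be continuous with q(t) ≥ q₀ > 0 for all t ∈ [0,1], and let f : ℝ → ℝ be continuous with f(x) = 0 for x < 0, F(ξ) = ∫₀^ξ f(s) ds, and F(ξ) ≥ 0 for all ξ ≥ 0. Set σ(p,q₀) = inf_{μ ∈ (0,1)} 1/(q₀ μ (1-μ)^{p-1}) and suppose limsup_{ξ → +∞} F(ξ)/ξ^p > σ(p,q₀) / (p · (1/2)^p). Then the energy functional is unbounded below on Lipschitz functions vanishing at the endpoints: for every M > 0 there exists a Lipschitz function w : [0,1] → ℝ with w(0) = w(1) = 0, differentiable at all but finitely many points, such that (1/p)∫₀¹ |w'(t)|^p dt - ∫₀¹ q(t) F(w(t)) dt < -M. -/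
/-!
Take a trapezoidal test function `w` of height `ξ` on `[0,1]`: linear on `[0,a]` and
`[1-a,1]`, constant `ξ` on a plateau of length `μ = 1 - 2a`. Its gradient energy is
`(2/p) ξ^p a^(1-p)`, while the potential term is at least `q₀ μ F(ξ)`, so the energy is at most
`ξ^p ((2/p) a^(1-p) - q₀ μ F(ξ)/ξ^p)`. The limsup hypothesis provides `r` and `μ` with
`(2/p) a^(1-p) < q₀ μ r` and arbitrarily large `ξ` with `F(ξ) > r ξ^p`; along these `ξ` the
energy tends to `-∞`.
-/

open MeasureTheory Set Filter

lemma intervalIntegrable_of_eqOn_Ioo {g : ℝ → ℝ} {u v k : ℝ} (huv : u ≤ v)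
    (hg : EqOn g (fun _ => k) (Ioo u v)) : IntervalIntegrable g volume u v := by
  rw [intervalIntegrable_iff_integrableOn_Ioo_of_le huv]
  exact (integrableOn_const measure_Ioo_lt_top.ne).congr_fun hg.symm measurableSet_Ioo

lemma intervalIntegral_eq_of_eqOn_Ioo {g : ℝ → ℝ} {u v k : ℝ} (huv : u ≤ v)
    (hg : EqOn g (fun _ => k) (Ioo u v)) : ∫ t in u..v, g t = (v - u) * k := by
  rw [intervalIntegral.integral_of_le huv, integral_Ioc_eq_integral_Ioo,
    setIntegral_congr_fun measurableSet_Ioo hg]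
  simp [huv]

lemma mul_le_intervalIntegral_of_le_on_Icc {g : ℝ → ℝ} {u a b v m : ℝ} (hua : u ≤ a)
    (hab : a ≤ b) (hbv : b ≤ v) (hg : ContinuousOn g (Icc u v))
    (hg₀ : ∀ t ∈ Icc u v, 0 ≤ g t) (hm : ∀ t ∈ Icc a b, m ≤ g t) :
    (b - a) * m ≤ ∫ t in u..v, g t := by
  have huv : u ≤ v := hua.trans (hab.trans hbv)
  calc (b - a) * m = ∫ _ in a..b, m := by simp
    _ ≤ ∫ t in a..b, g t :=
        intervalIntegral.integral_mono_on hab intervalIntegrable_const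
          ((hg.mono (Icc_subset_Icc hua hbv)).intervalIntegrable_of_Icc hab) hm
    _ ≤ ∫ t in u..v, g t :=
        intervalIntegral.integral_mono_interval hua hab hbv
          ((ae_restrict_mem measurableSet_Ioc).mono fun t ht => hg₀ t (Ioc_subset_Icc_self ht))
          (hg.intervalIntegrable_of_Icc huv)

noncomputable def trapezoid (a h t : ℝ) : ℝ := h / a * min (min t a) (1 - t)

section Trapezoid

variable {a h t : ℝ}

lemma lipschitzWith_trapezoid (a h : ℝ) : LipschitzWith ‖h / a‖₊ (trapezoid a h) := by
  have hmin : LipschitzWith 1 fun t : ℝ => min (min t a) (1 - t) := by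
    simpa using (LipschitzWith.id.min (LipschitzWith.const a)).min
      ((LipschitzWith.const (α := ℝ) 1).sub LipschitzWith.id)
  have := (lipschitzWith_smul (h / a)).comp hmin
  rwa [mul_one] at this

lemma trapezoid_zero (ha : 0 ≤ a) : trapezoid a h 0 = 0 := by
  simp [trapezoid, ha]

lemma trapezoid_one (ha : 0 ≤ a) : trapezoid a h 1 = 0 := by
  simp [trapezoid, ha]

lemma trapezoid_of_mem_Icc (ha : a ≠ 0) (ht : t ∈ Icc a (1 - a)) : trapezoid a h t = h := by
  rw [trapezoid, min_eq_right ht.1, min_eq_left (by linarith [ht.2]), div_mul_cancel₀ h ha]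

lemma trapezoid_nonneg (ha : 0 ≤ a) (hh : 0 ≤ h) (ht : t ∈ Icc 0 1) : 0 ≤ trapezoid a h t :=
  mul_nonneg (div_nonneg hh ha) (le_min (le_min ht.1 ha) (by linarith [ht.2]))

lemma hasDerivAt_trapezoid_of_lt (ha : a ≤ 1 / 2) (ht : t < a) :
    HasDerivAt (trapezoid a h) (h / a) t := by
  have hlin := (hasDerivAt_id t).const_mul (h / a)
  rw [mul_one] at hlin
  refine hlin.congr_of_eventuallyEq ?_
  filter_upwards [Iio_mem_nhds ht] with s hs
  rw [mem_Iio] at hs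
  rw [trapezoid, min_eq_left hs.le, min_eq_left (by linarith), id]

lemma hasDerivAt_trapezoid_of_mem_Ioo (ha : a ≠ 0) (ht : t ∈ Ioo a (1 - a)) :
    HasDerivAt (trapezoid a h) 0 t := by
  refine (hasDerivAt_const t h).congr_of_eventuallyEq ?_
  filter_upwards [Ioo_mem_nhds ht.1 ht.2] with s hs
  exact trapezoid_of_mem_Icc ha (Ioo_subset_Icc_self hs)

lemma hasDerivAt_trapezoid_of_gt (ha : a ≤ 1 / 2) (ht : 1 - a < t) :
    HasDerivAt (trapezoid a h) (-(h / a)) t := by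
  have hlin := ((hasDerivAt_id t).const_sub 1).const_mul (h / a)
  rw [mul_neg_one] at hlin
  refine hlin.congr_of_eventuallyEq ?_
  filter_upwards [Ioi_mem_nhds ht] with s hs
  rw [mem_Ioi] at hs
  rw [trapezoid, min_eq_right (by linarith : a ≤ s), min_eq_right (by linarith : 1 - s ≤ a), id]

lemma differentiableAt_trapezoid (ha : a ≠ 0) (ha' : a ≤ 1 / 2) (hta : t ≠ a)
    (hta' : t ≠ 1 - a) : DifferentiableAt ℝ (trapezoid a h) t := by
  rcases hta.lt_or_gt with ht | ht
  · exact (hasDerivAt_trapezoid_of_lt ha' ht).differentiableAt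
  rcases hta'.lt_or_gt with ht' | ht'
  · exact (hasDerivAt_trapezoid_of_mem_Ioo ha ⟨ht, ht'⟩).differentiableAt
  · exact (hasDerivAt_trapezoid_of_gt ha' ht').differentiableAt

lemma integral_abs_deriv_trapezoid_rpow {p : ℝ} (hp : 0 < p) (ha : 0 < a) (ha' : a ≤ 1 / 2) :
    ∫ t in (0 : ℝ)..1, |deriv (trapezoid a h) t| ^ p = 2 * a * |h / a| ^ p := by
  set g := fun t => |deriv (trapezoid a h) t| ^ p
  have hrise : EqOn g (fun _ => |h / a| ^ p) (Ioo 0 a) := fun t ht => by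
    simp only [g, (hasDerivAt_trapezoid_of_lt ha' ht.2).deriv]
  have hflat : EqOn g (fun _ => 0) (Ioo a (1 - a)) := fun t ht => by
    simp only [g, (hasDerivAt_trapezoid_of_mem_Ioo ha.ne' ht).deriv, abs_zero,
      Real.zero_rpow hp.ne']
  have hfall : EqOn g (fun _ => |h / a| ^ p) (Ioo (1 - a) 1) := fun t ht => by
    simp only [g, (hasDerivAt_trapezoid_of_gt ha' ht.1).deriv, abs_neg]
  have h₁ := intervalIntegrable_of_eqOn_Ioo ha.le hrise
  have h₂ := intervalIntegrable_of_eqOn_Ioo (by linarith) hflat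
  have h₃ := intervalIntegrable_of_eqOn_Ioo (by linarith) hfall
  rw [← intervalIntegral.integral_add_adjacent_intervals (h₁.trans h₂) h₃,
    ← intervalIntegral.integral_add_adjacent_intervals h₁ h₂,
    intervalIntegral_eq_of_eqOn_Ioo ha.le hrise,
    intervalIntegral_eq_of_eqOn_Ioo (by linarith) hflat,
    intervalIntegral_eq_of_eqOn_Ioo (by linarith) hfall]
  ring

end Trapezoid

lemma energy_trapezoid_le {p q₀ a h : ℝ} {q F : ℝ → ℝ} (hp : 0 < p) (ha : 0 < a)
    (ha' : a ≤ 1 / 2) (hh : 0 ≤ h) (hq₀ : 0 ≤ q₀) (hqc : ContinuousOn q (Icc 0 1))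
    (hq : ∀ t ∈ Icc (0 : ℝ) 1, q₀ ≤ q t) (hFc : Continuous F) (hF₀ : ∀ ξ, 0 ≤ ξ → 0 ≤ F ξ) :
    1 / p * (∫ t in (0 : ℝ)..1, |deriv (trapezoid a h) t| ^ p)
        - ∫ t in (0 : ℝ)..1, q t * F (trapezoid a h t)
      ≤ 2 / p * h ^ p * a ^ (1 - p) - (1 - 2 * a) * (q₀ * F h) := by
  have hgrad : ∫ t in (0 : ℝ)..1, |deriv (trapezoid a h) t| ^ p = 2 * h ^ p * a ^ (1 - p) := by
    rw [integral_abs_deriv_trapezoid_rpow hp ha ha', abs_of_nonneg (div_nonneg hh ha.le),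
      Real.div_rpow hh ha.le, Real.rpow_sub ha, Real.rpow_one]
    field_simp
  have hpot : (1 - 2 * a) * (q₀ * F h) ≤ ∫ t in (0 : ℝ)..1, q t * F (trapezoid a h t) := by
    rw [show 1 - 2 * a = 1 - a - a by ring]
    refine mul_le_intervalIntegral_of_le_on_Icc ha.le (by linarith) (by linarith)
      (hqc.mul (hFc.comp (lipschitzWith_trapezoid a h).continuous).continuousOn)
      (fun t ht => mul_nonneg (hq₀.trans (hq t ht)) (hF₀ _ (trapezoid_nonneg ha.le hh ht)))
      (fun t ht => ?_)
    rw [trapezoid_of_mem_Icc ha.ne' ht]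
    exact mul_le_mul_of_nonneg_right (hq t ⟨ha.le.trans ht.1, ht.2.trans (by linarith)⟩)
      (hF₀ h hh)
  rw [hgrad, show 1 / p * (2 * h ^ p * a ^ (1 - p)) = 2 / p * h ^ p * a ^ (1 - p) by ring]
  linarith

lemma exists_two_div_mul_rpow_lt {p q₀ r : ℝ} (hp : 0 < p) (hq₀ : 0 < q₀)
    (h : sInf ((fun μ : ℝ => 1 / (q₀ * μ * (1 - μ) ^ (p - 1))) '' Ioo 0 1) / (p * (1 / 2) ^ p)
      < r) :
    ∃ μ ∈ Ioo (0 : ℝ) 1, 2 / p * ((1 - μ) / 2) ^ (1 - p) < q₀ * μ * r := by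
  have hbdd : BddBelow ((fun μ : ℝ => 1 / (q₀ * μ * (1 - μ) ^ (p - 1))) '' Ioo 0 1) := by
    refine ⟨0, ?_⟩
    rintro _ ⟨μ, hμ, rfl⟩
    have : 0 < 1 - μ := sub_pos.mpr hμ.2
    have : 0 < μ := hμ.1
    positivity
  rw [div_lt_iff₀ (by positivity)] at h
  obtain ⟨_, ⟨μ, hμ, rfl⟩, hlt⟩ :=
    (csInf_lt_iff hbdd ⟨_, mem_image_of_mem _ (by norm_num : (1 / 2 : ℝ) ∈ Ioo 0 1)⟩).mp h
  refine ⟨μ, hμ, ?_⟩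
  have h1μ : 0 < 1 - μ := sub_pos.mpr hμ.2
  have : 0 < μ := hμ.1
  have hsplit : 2 / p * ((1 - μ) / 2) ^ (1 - p) = 1 / (p * (1 / 2) ^ p * (1 - μ) ^ (p - 1)) := by
    rw [Real.div_rpow h1μ.le zero_le_two, Real.rpow_sub two_pos, Real.rpow_one,
      show 1 - p = -(p - 1) by ring, Real.rpow_neg h1μ.le, Real.div_rpow zero_le_one zero_le_two,
      Real.one_rpow]
    field_simp
  rw [div_lt_iff₀ (by positivity)] at hlt
  rw [hsplit, div_lt_iff₀ (by positivity)]
  linarith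

theorem stmt_13_general (p q₀ : ℝ) (hp : 1 < p) (hq₀ : 0 < q₀)
    (q f F : ℝ → ℝ)
    (hqc : ContinuousOn q (Set.Icc 0 1))
    (hq : ∀ t ∈ Set.Icc (0 : ℝ) 1, q₀ ≤ q t)
    (hf : Continuous f)
    (hF : ∀ ξ, F ξ = ∫ s in (0 : ℝ)..ξ, f s)
    (hFpos : ∀ ξ : ℝ, 0 ≤ ξ → 0 ≤ F ξ)
    (σpq : ℝ)
    (hσ : σpq = sInf ((fun μ : ℝ => 1 / (q₀ * μ * (1 - μ) ^ (p - 1))) '' Set.Ioo 0 1))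
    (hlimsup : (↑(σpq / (p * (1 / 2 : ℝ) ^ p)) : EReal)
      < Filter.limsup (fun ξ : ℝ => ((F ξ / ξ ^ p : ℝ) : EReal)) Filter.atTop) :
    ∀ M > (0 : ℝ), ∃ w : ℝ → ℝ,
      (∃ K : NNReal, LipschitzWith K w) ∧ w 0 = 0 ∧ w 1 = 0 ∧
      (∃ S : Finset ℝ, ∀ t ∉ S, DifferentiableAt ℝ w t) ∧
      (1 / p) * (∫ t in (0 : ℝ)..1, |deriv w t| ^ p)
        - (∫ t in (0 : ℝ)..1, q t * F (w t)) < -M := by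
  intro M hM
  have hp₀ : 0 < p := by linarith
  have hFc : Continuous F := by
    rw [funext hF]
    exact intervalIntegral.continuous_primitive (fun u v => hf.intervalIntegrable u v) 0
  obtain ⟨r, hσr, hr⟩ := EReal.lt_iff_exists_real_btwn.mp hlimsup
  obtain ⟨μ, hμ, hgain⟩ := exists_two_div_mul_rpow_lt hp₀ hq₀ (hσ ▸ EReal.coe_lt_coe_iff.mp hσr)
  set a := (1 - μ) / 2 with ha_def
  have ha : 0 < a := by linarith [hμ.2]
  have ha' : a ≤ 1 / 2 := by linarith [hμ.1]
  have hε : 0 < q₀ * μ * r - 2 / p * a ^ (1 - p) := sub_pos.mpr hgain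
  have hfreq : ∃ᶠ ξ in atTop, r < F ξ / ξ ^ p :=
    (frequently_lt_of_lt_limsup (by isBoundedDefault) hr).mono fun _ => EReal.coe_lt_coe_iff.mp
  obtain ⟨ξ, hFξ, hξ₀, hξM⟩ := (hfreq.and_eventually ((eventually_gt_atTop 0).and
    ((tendsto_rpow_atTop hp₀).eventually_gt_atTop (M / _)))).exists
  rw [lt_div_iff₀ (by positivity)] at hFξ
  rw [div_lt_iff₀ hε] at hξM
  refine ⟨trapezoid a ξ, ⟨_, lipschitzWith_trapezoid a ξ⟩, trapezoid_zero ha.le,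
    trapezoid_one ha.le, ⟨{a, 1 - a}, fun t ht => ?_⟩, ?_⟩
  · simp only [Finset.mem_insert, Finset.mem_singleton, not_or] at ht
    exact differentiableAt_trapezoid ha.ne' ha' ht.1 ht.2
  calc _ ≤ 2 / p * ξ ^ p * a ^ (1 - p) - (1 - 2 * a) * (q₀ * F ξ) :=
        energy_trapezoid_le hp₀ ha ha' hξ₀.le hq₀.le hqc hq hFc hFpos
    _ < -M := by
      have hgap := mul_lt_mul_of_pos_left hFξ (mul_pos hq₀ hμ.1)
      rw [show 1 - 2 * a = μ by ring]
      nlinarith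

/-- Under condition (iii) of Theorem 1.1 (with
`sup_{t∈(0,1)} dist(t,{0,1}) = 1/2`), the energy functional
`w ↦ (1/p)∫₀¹|w'|^p - ∫₀¹ q F(w)` is unbounded below on Lipschitz functions vanishing
at the endpoints of `[0,1]`. -/
theorem stmt_13 (p q₀ : ℝ) (hp : 1 < p) (hq₀ : 0 < q₀)
    (q f F : ℝ → ℝ)
    (hqc : ContinuousOn q (Set.Icc 0 1))
    (hq : ∀ t ∈ Set.Icc (0 : ℝ) 1, q₀ ≤ q t)
    (hf : Continuous f) (hfneg : ∀ x < (0 : ℝ), f x = 0)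
    (hF : ∀ ξ, F ξ = ∫ s in (0 : ℝ)..ξ, f s)
    (hFpos : ∀ ξ : ℝ, 0 ≤ ξ → 0 ≤ F ξ)
    (σpq : ℝ)
    (hσ : σpq = sInf ((fun μ : ℝ => 1 / (q₀ * μ * (1 - μ) ^ (p - 1))) '' Set.Ioo 0 1))
    (hlimsup : (↑(σpq / (p * (1 / 2 : ℝ) ^ p)) : EReal)
      < Filter.limsup (fun ξ : ℝ => ((F ξ / ξ ^ p : ℝ) : EReal)) Filter.atTop) :
    ∀ M > (0 : ℝ), ∃ w : ℝ → ℝ,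
      (∃ K : NNReal, LipschitzWith K w) ∧ w 0 = 0 ∧ w 1 = 0 ∧
      (∃ S : Finset ℝ, ∀ t ∉ S, DifferentiableAt ℝ w t) ∧
      (1 / p) * (∫ t in (0 : ℝ)..1, |deriv w t| ^ p)
        - (∫ t in (0 : ℝ)..1, q t * F (w t)) < -M :=
  stmt_13_general p q₀ hp hq₀ q f F hqc hq hf hF hFpos σpq hσ hlimsup
end

section
/- (Ricceri-type variational principle, part 1.) Let X be a reflexive real Banach space, and let Φ, Ψ : X → ℝ be sequentially weakly lower semicontinuous (i.e., whenever xₙ converges weakly to x, liminf Φ(xₙ) ≥ Φ(x), and likewise for Ψ) and Gâteaux differentiable (at each x there is a continuous linear functional equal to all directional derivatives). Assume Ψ is strongly continuous and coercive: Ψ(x) → +∞ as ‖x‖ → +∞. For r > inf_X Ψ put φ(r) = inf over x with Ψ(x) < r of [Φ(x) - inf Φ over the weak closure of {Ψ < r}] / (r - Ψ(x)). Fix λ ∈ ℝ. If there is a real sequence rₙ → +∞ with φ(rₙ) < λ for every n, then either Φ + λΨ has a global minimum, or there exists a sequence (xₙ) of critical points of Φ + λΨ (points where the Gâteaux derivative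 of Φ + λΨ vanishes) such that Ψ(xₙ) → +∞. -/
/-!
For `r = rₙ`, the hypothesis `φ(r) < λ` forces `λ > 0` and yields `x₀` with `Ψ x₀ < r` and
`Φ x₀ + λ Ψ x₀ < inf_C Φ + λ r`, where `C` is the weak closure of `{Ψ < r}`. Coercivity makes `C`
bounded, so in the reflexive space (sequential weak compactness) and by weak lower semicontinuity
`Φ + λ Ψ` attains its minimum on `C`. Comparing with `x₀` puts the minimizer in the open set
`{Ψ < r}`, so it is a local minimum and hence a critical point. If the `Ψ`-values of these
minimizers stay bounded, one of them minimizes `Φ + λ Ψ` on every `{Ψ < rₙ}`, i.e. globally;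
otherwise a subsequence has `Ψ → ∞`.
-/

open Filter Topology NormedSpace Set

section WeakConvergence

variable {X : Type*} [NormedAddCommGroup X] [NormedSpace ℝ X]

def WeakTendsto (u : ℕ → X) (x : X) : Prop :=
  ∀ L : X →L[ℝ] ℝ, Tendsto (fun n => L (u n)) atTop (𝓝 (L x))

def SeqWeaklyLowerSemicontinuous (F : X → ℝ) : Prop :=
  ∀ (u : ℕ → X) (x : X), WeakTendsto u x → F x ≤ liminf (fun n => F (u n)) atTop

theorem WeakTendsto.tendsto_toWeakSpace {u : ℕ → X} {x : X} (h : WeakTendsto u x) :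
    Tendsto (fun n => toWeakSpace ℝ X (u n)) atTop (𝓝 (toWeakSpace ℝ X x)) :=
  (WeakBilin.tendsto_iff_forall_eval_tendsto _ fun _ _ hxy =>
    SeparatingDual.eq_iff_forall_dual_eq.2 fun L => congrArg (· L) hxy).2 h

theorem WeakTendsto.segment {u : ℕ → X} {x : X} (h : WeakTendsto u x) {t : ℕ → ℝ}
    (ht : ∀ n, t n ∈ Icc (0 : ℝ) 1) : WeakTendsto (fun n => x + t n • (u n - x)) x := by
  intro L
  have hsmall : Tendsto (fun n => t n * (L (u n) - L x)) atTop (𝓝 0) := by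
    refine isBoundedUnder_le_mul_tendsto_zero ?_ (tendsto_sub_nhds_zero_iff.2 (h L))
    refine isBoundedUnder_of ⟨1, fun n => ?_⟩
    simpa [abs_le] using ⟨(ht n).1.trans' (by norm_num), (ht n).2⟩
  simpa using hsmall.const_add (L x)

theorem Submodule.mem_of_forall_dual_eq_zero {Z : Submodule ℝ X} (hZ : IsClosed (Z : Set X))
    {x : X} (hx : ∀ L : X →L[ℝ] ℝ, (∀ z ∈ Z, L z = 0) → L x = 0) : x ∈ Z := by
  by_contra hxZ
  obtain ⟨L, c, hLZ, hcx⟩ := geometric_hahn_banach_closed_point Z.convex hZ hxZ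
  have hc : 0 < c := by simpa using hLZ 0 Z.zero_mem
  refine (hc.trans hcx).ne' (hx L fun z hz => ?_)
  by_contra hLz
  have := hLZ ((c / L z) • z) (Z.smul_mem _ hz)
  rw [map_smul, smul_eq_mul, div_mul_cancel₀ _ hLz] at this
  exact this.false

theorem TopologicalSpace.IsSeparable.exists_seq_dual_separating {s : Set X} (hs : IsSeparable s) :
    ∃ f : ℕ → X →L[ℝ] ℝ, ∀ x ∈ s, (∀ n, f n x = 0) → x = 0 := by
  obtain ⟨c, hc, hsc⟩ := hs
  obtain ⟨d, hd⟩ := (hc.insert 0).exists_eq_range (insert_nonempty 0 c)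
  choose f hf1 hfd using fun n => exists_dual_vector'' ℝ (d n)
  refine ⟨f, fun x hx hfx => ?_⟩
  by_contra hx0
  have hpos : 0 < ‖x‖ := norm_pos_iff.2 hx0
  have hxd : x ∈ closure (range d) := hd ▸ closure_mono (subset_insert 0 c) (hsc hx)
  obtain ⟨_, ⟨n, rfl⟩, hn⟩ := Metric.mem_closure_iff.1 hxd (‖x‖ / 2) (half_pos hpos)
  rw [dist_eq_norm] at hn
  have hdn : ‖d n‖ ≤ ‖d n - x‖ := by
    calc ‖d n‖ = f n (d n - x) := by simp [hfd, hfx]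
      _ ≤ ‖f n‖ * ‖d n - x‖ := (le_abs_self _).trans ((f n).le_opNorm _)
      _ ≤ ‖d n - x‖ := mul_le_of_le_one_left (norm_nonneg _) (hf1 n)
  have := norm_le_norm_add_norm_sub' x (d n)
  rw [norm_sub_rev] at hdn
  linarith

theorem IsCompact.tendsto_subseq_of_separating {Y : Type*} [TopologicalSpace Y] {K : Set Y}
    (hK : IsCompact K) {g : ℕ → Y → ℝ} (hg : ∀ n, Continuous (g n))
    (hsep : ∀ ψ ∈ K, ∀ χ ∈ K, (∀ n, g n ψ = g n χ) → ψ = χ) {x : ℕ → Y} (hx : ∀ n, x n ∈ K) :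
    ∃ a ∈ K, ∃ φ : ℕ → ℕ, StrictMono φ ∧ Tendsto (x ∘ φ) atTop (𝓝 a) := by
  have : CompactSpace K := isCompact_iff_compactSpace.1 hK
  have : TopologicalSpace.MetrizableSpace K :=
    Metric.PiNatEmbed.TopologicalSpace.MetrizableSpace.of_countable_separating
      (fun n (ψ : K) => g n ψ) (fun n => (hg n).comp continuous_subtype_val)
      fun ψ χ hne => by_contra fun h => hne <| Subtype.ext <| hsep _ ψ.2 _ χ.2 <| by simpa using h
  obtain ⟨a, φ, hφ, ha⟩ := SeqCompactSpace.tendsto_subseq fun n => (⟨x n, hx n⟩ : K)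
  exact ⟨a, a.2, φ, hφ, (continuous_subtype_val.tendsto a).comp ha⟩

/-- Sequential weak compactness of bounded sets in a reflexive space: the canonical image of the
sequence lies in a weak-* compact subset of the bidual on which countably many functionals separate
points, hence which is metrizable. -/
theorem exists_weakTendsto_subseq (hrefl : Function.Surjective (inclusionInDoubleDual ℝ X))
    {u : ℕ → X} {R : ℝ} (hu : ∀ n, ‖u n‖ ≤ R) :
    ∃ (x : X) (φ : ℕ → ℕ), StrictMono φ ∧ WeakTendsto (u ∘ φ) x := by
  set Z := (Submodule.span ℝ (range u)).topologicalClosure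
  have huZ : ∀ n, u n ∈ Z := fun n =>
    Submodule.le_topologicalClosure _ (Submodule.subset_span (mem_range_self n))
  obtain ⟨f, hf⟩ : ∃ f : ℕ → X →L[ℝ] ℝ, ∀ x ∈ Z, (∀ n, f n x = 0) → x = 0 :=
    TopologicalSpace.IsSeparable.exists_seq_dual_separating <| by
      simpa only [Z, Submodule.topologicalClosure_coe] using
        ((countable_range u).isSeparable.span (R := ℝ)).closure
  let J : X → WeakDual ℝ (X →L[ℝ] ℝ) := fun x => StrongDual.toWeakDual (inclusionInDoubleDual ℝ X x)
  have hrep : ∀ ψ : WeakDual ℝ (X →L[ℝ] ℝ), ∃ x : X, ∀ L, ψ L = L x := fun ψ =>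
    (hrefl (WeakDual.toStrongDual ψ)).imp fun x hx L => (congrArg (· L) hx).symm
  let K : Set (WeakDual ℝ (X →L[ℝ] ℝ)) := WeakDual.toStrongDual ⁻¹' Metric.closedBall 0 R ∩
    ⋂ (L : X →L[ℝ] ℝ) (_ : ∀ z ∈ Z, L z = 0), {ψ | ψ L = 0}
  have hKc : IsCompact K :=
    (WeakDual.isCompact_closedBall (0 : StrongDual ℝ (X →L[ℝ] ℝ)) R).inter_right <|
      isClosed_biInter fun L _ => isClosed_eq (WeakDual.eval_continuous L) continuous_const
  have hJK : ∀ n, J (u n) ∈ K := fun n =>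
    ⟨(mem_closedBall_zero_iff (E := StrongDual ℝ (X →L[ℝ] ℝ))).2
      ((double_dual_bound ℝ X (u n)).trans (hu n)), mem_iInter₂.2 fun L hL => hL _ (huZ n)⟩
  have hsep : ∀ ψ ∈ K, ∀ χ ∈ K, (∀ n, ψ (f n) = χ (f n)) → ψ = χ := by
    intro ψ hψ χ hχ heq
    obtain ⟨x, hx⟩ := hrep ψ
    obtain ⟨y, hy⟩ := hrep χ
    have hxy : x - y ∈ Z := Z.mem_of_forall_dual_eq_zero (Submodule.isClosed_topologicalClosure _)
      fun L hL => by
        rw [map_sub, ← hx, ← hy, mem_iInter₂.1 hψ.2 L hL, mem_iInter₂.1 hχ.2 L hL, sub_self]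
    have : x = y := sub_eq_zero.1 <| hf _ hxy fun n => by simp [← hx, ← hy, heq n]
    exact DFunLike.ext _ _ fun L => (hx L).trans (this ▸ (hy L).symm)
  obtain ⟨ψ, -, φ, hφ, hψ⟩ :=
    hKc.tendsto_subseq_of_separating (fun n => WeakDual.eval_continuous (f n)) hsep hJK
  obtain ⟨x, hx⟩ := hrep ψ
  refine ⟨x, φ, hφ, fun L => ?_⟩
  rw [← hx]
  simpa [J, Function.comp_def] using ((WeakDual.eval_continuous L).tendsto ψ).comp hψ

def weakClosure (s : Set X) : Set X :=
  toWeakSpace ℝ X ⁻¹' closure (toWeakSpace ℝ X '' s)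

theorem subset_weakClosure (s : Set X) : s ⊆ weakClosure s := fun _ hx =>
  subset_closure (X := WeakSpace ℝ X) (mem_image_of_mem _ hx)

theorem WeakTendsto.mem_weakClosure {s : Set X} {u : ℕ → X} {x : X} (h : WeakTendsto u x)
    (hu : ∀ n, u n ∈ weakClosure s) : x ∈ weakClosure s :=
  (isClosed_closure (X := WeakSpace ℝ X)).mem_of_tendsto h.tendsto_toWeakSpace
    (Eventually.of_forall hu)

theorem weakClosure_subset_closedBall {s : Set X} {R : ℝ} (hs : s ⊆ Metric.closedBall 0 R) :
    weakClosure s ⊆ Metric.closedBall 0 R := by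
  intro x hx
  have hx' := closure_mono (X := WeakSpace ℝ X) (image_mono hs) hx
  rw [← (convex_closedBall (0 : X) R).toWeakSpace_closure ℝ, Metric.isClosed_closedBall.closure_eq]
    at hx'
  exact (toWeakSpace ℝ X).injective.mem_set_image.1 hx'

end WeakConvergence

section Gateaux

variable {X : Type*} [NormedAddCommGroup X] [NormedSpace ℝ X]

def HasGateauxDeriv (F : X → ℝ) (DF : X → X →L[ℝ] ℝ) : Prop :=
  ∀ x h : X, Tendsto (fun s : ℝ => (F (x + s • h) - F x) / s) (𝓝[≠] 0) (𝓝 (DF x h))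

variable {F Φ Ψ : X → ℝ} {DF DΦ DΨ : X → X →L[ℝ] ℝ}

theorem HasGateauxDeriv.hasLineDerivAt (hF : HasGateauxDeriv F DF) (x h : X) :
    HasLineDerivAt ℝ F (DF x h) x h :=
  hasLineDerivAt_iff_tendsto_slope_zero.2 <| by
    simpa only [smul_eq_mul, div_eq_inv_mul] using hF x h

theorem HasGateauxDeriv.continuous_comp_line (hF : HasGateauxDeriv F DF) (x h : X) :
    Continuous fun t : ℝ => F (x + t • h) := by
  refine continuous_iff_continuousAt.2 fun t => ?_
  have hshift : (fun t' : ℝ => F (x + t' • h)) =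
      (fun s : ℝ => F (x + t • h + s • h)) ∘ fun t' => t' - t := by
    ext t'
    simp only [Function.comp_apply, sub_smul, add_add_sub_cancel]
  rw [hshift]
  exact (HasDerivAt.continuousAt (hF.hasLineDerivAt (x + t • h) h)).comp_of_eq
    (continuous_sub_right t).continuousAt (sub_self t)

theorem HasGateauxDeriv.add_smul_eq_zero_of_isLocalMin (hΦ : HasGateauxDeriv Φ DΦ)
    (hΨ : HasGateauxDeriv Ψ DΨ) {c : ℝ} {x : X} (hx : IsLocalMin (fun y => Φ y + c * Ψ y) x) :
    DΦ x + c • DΨ x = 0 := by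
  ext h
  have hd : HasLineDerivAt ℝ (fun y => Φ y + c * Ψ y) (DΦ x h + c * DΨ x h) x h :=
    HasDerivAt.add (hΦ.hasLineDerivAt x h) ((hΨ.hasLineDerivAt x h).const_mul c)
  simpa using hx.hasLineDerivAt_eq_zero hd

end Gateaux

theorem liminf_add_mul_liminf_le {u v : ℕ → ℝ} {c μ : ℝ} (hu : BddBelow (range u))
    (hv : BddBelow (range v)) (hc : 0 ≤ c) (h : Tendsto (fun n => u n + c * v n) atTop (𝓝 μ)) :
    liminf u atTop + c * liminf v atTop ≤ μ := by
  refine le_of_forall_pos_le_add fun ε hε => ?_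
  set δ := ε / (1 + c)
  have hδ : (1 + c) * δ = ε := mul_div_cancel₀ ε (by positivity)
  have hu' := eventually_lt_of_lt_liminf (sub_lt_self (liminf u atTop) (by positivity : 0 < δ))
    hu.isBoundedUnder_of_range
  have hv' := eventually_lt_of_lt_liminf (sub_lt_self (liminf v atTop) (by positivity : 0 < δ))
    hv.isBoundedUnder_of_range
  have : liminf u atTop - δ + c * (liminf v atTop - δ) ≤ μ := by
    refine ge_of_tendsto h ?_
    filter_upwards [hu', hv'] with n hun hvn
    nlinarith
  nlinarith

section LowerSemicontinuity

variable {X : Type*} [NormedAddCommGroup X] [NormedSpace ℝ X] {F Φ Ψ : X → ℝ}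

/-- `Filter.liminf` of a sequence unbounded below is a junk value, so lower semicontinuity says
nothing about `w` itself; the intermediate value theorem replaces `w n` by a point of the segment
`[x, w n]` where `F` takes the value `b`. -/
theorem SeqWeaklyLowerSemicontinuous.frequently_le (hF : SeqWeaklyLowerSemicontinuous F)
    (hline : ∀ x h : X, Continuous fun t : ℝ => F (x + t • h)) {w : ℕ → X} {x : X}
    (hw : WeakTendsto w x) {b : ℝ} (hb : b < F x) : ∃ᶠ n in atTop, b ≤ F (w n) := by
  by_contra hfreq
  rw [not_frequently] at hfreq
  have hIVT : ∀ n, ∃ t ∈ Icc (0 : ℝ) 1, F (w n) < b → F (x + t • (w n - x)) = b := by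
    intro n
    by_cases hn : F (w n) < b
    · obtain ⟨t, ht, htb⟩ := intermediate_value_Icc' zero_le_one
        (hline x (w n - x)).continuousOn (by simpa using And.intro hn.le hb.le)
      exact ⟨t, ht, fun _ => htb⟩
    · exact ⟨0, left_mem_Icc.2 zero_le_one, fun h => absurd h hn⟩
  choose t ht htb using hIVT
  have hconst : Tendsto (fun n => F (x + t n • (w n - x))) atTop (𝓝 b) :=
    tendsto_const_nhds.congr' (hfreq.mono fun n hn => (htb n (not_le.1 hn)).symm)
  have := hF _ x (hw.segment ht)
  rw [hconst.liminf_eq] at this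
  exact hb.not_ge this

theorem SeqWeaklyLowerSemicontinuous.exists_forall_le_of_norm_le
    (hrefl : Function.Surjective (inclusionInDoubleDual ℝ X)) (hF : SeqWeaklyLowerSemicontinuous F)
    (hline : ∀ x h : X, Continuous fun t : ℝ => F (x + t • h)) (R : ℝ) :
    ∃ m, ∀ x, ‖x‖ ≤ R → m ≤ F x := by
  by_contra! h
  choose w hwR hwF using fun n : ℕ => h (-n)
  obtain ⟨x, φ, hφ, hwx⟩ := exists_weakTendsto_subseq hrefl hwR
  obtain ⟨N, hN⟩ := exists_nat_gt (1 - F x)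
  have hbelow : ∀ᶠ n in atTop, F (w (φ n)) < F x - 1 := by
    filter_upwards [eventually_ge_atTop N] with n hn
    have : (N : ℝ) ≤ φ n := by exact_mod_cast hn.trans hφ.le_apply
    linarith [hwF (φ n)]
  obtain ⟨n, hle, hlt⟩ :=
    ((hF.frequently_le hline hwx (sub_one_lt (F x))).and_eventually hbelow).exists
  exact hle.not_gt hlt

theorem exists_isMinOn_add_mul (hrefl : Function.Surjective (inclusionInDoubleDual ℝ X))
    (hΦ : SeqWeaklyLowerSemicontinuous Φ) (hΨ : SeqWeaklyLowerSemicontinuous Ψ)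
    (hΦline : ∀ x h : X, Continuous fun t : ℝ => Φ (x + t • h))
    (hΨline : ∀ x h : X, Continuous fun t : ℝ => Ψ (x + t • h)) {c : ℝ} (hc : 0 ≤ c)
    {C : Set X} (hC : C.Nonempty) {R : ℝ} (hCR : ∀ x ∈ C, ‖x‖ ≤ R)
    (hCseq : ∀ (u : ℕ → X) (x : X), (∀ n, u n ∈ C) → WeakTendsto u x → x ∈ C) :
    ∃ x ∈ C, IsMinOn (fun y => Φ y + c * Ψ y) C x := by
  obtain ⟨mΦ, hmΦ⟩ := hΦ.exists_forall_le_of_norm_le hrefl hΦline R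
  obtain ⟨mΨ, hmΨ⟩ := hΨ.exists_forall_le_of_norm_le hrefl hΨline R
  set J := fun y => Φ y + c * Ψ y
  have hJbdd : BddBelow (J '' C) := ⟨mΦ + c * mΨ, forall_mem_image.2 fun y hy =>
    add_le_add (hmΦ y (hCR y hy)) (mul_le_mul_of_nonneg_left (hmΨ y (hCR y hy)) hc)⟩
  obtain ⟨a, -, ha, haC⟩ := exists_seq_tendsto_sInf (hC.image J) hJbdd
  choose q hqC hqa using haC
  obtain ⟨x, φ, hφ, hqx⟩ := exists_weakTendsto_subseq hrefl fun n => hCR _ (hqC n)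
  refine ⟨x, hCseq _ x (fun n => hqC (φ n)) hqx, isMinOn_iff.2 fun y hy => ?_⟩
  have hlim : Tendsto (fun n => Φ (q (φ n)) + c * Ψ (q (φ n))) atTop (𝓝 (sInf (J '' C))) := by
    simpa [J, Function.comp_def, hqa] using ha.comp hφ.tendsto_atTop
  calc J x ≤ liminf (fun n => Φ (q (φ n))) atTop + c * liminf (fun n => Ψ (q (φ n))) atTop :=
        add_le_add (hΦ _ x hqx) (mul_le_mul_of_nonneg_left (hΨ _ x hqx) hc)
    _ ≤ sInf (J '' C) :=
        liminf_add_mul_liminf_le ⟨mΦ, forall_mem_range.2 fun n => hmΦ _ (hCR _ (hqC (φ n)))⟩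
          ⟨mΨ, forall_mem_range.2 fun n => hmΨ _ (hCR _ (hqC (φ n)))⟩ hc hlim
    _ ≤ J y := csInf_le hJbdd (mem_image_of_mem J hy)

end LowerSemicontinuity

theorem exists_add_mul_lt_of_sInf_div_lt {α : Type*} {f g : α → ℝ} {S : Set α} (hS : S.Nonempty)
    {m ρ c : ℝ} (hm : ∀ x ∈ S, m ≤ f x) (hρ : ∀ x ∈ S, g x < ρ)
    (h : sInf ((fun x => (f x - m) / (ρ - g x)) '' S) < c) :
    0 < c ∧ ∃ x ∈ S, f x + c * g x < m + c * ρ := by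
  have hnonneg : ∀ a ∈ (fun x => (f x - m) / (ρ - g x)) '' S, 0 ≤ a := forall_mem_image.2
    fun x hx => div_nonneg (sub_nonneg.2 (hm x hx)) (sub_pos.2 (hρ x hx)).le
  refine ⟨(le_csInf (hS.image _) hnonneg).trans_lt h, ?_⟩
  obtain ⟨_, ⟨x, hx, rfl⟩, hlt⟩ := exists_lt_of_csInf_lt (hS.image _) h
  have := (div_lt_iff₀ (sub_pos.2 (hρ x hx))).1 hlt
  exact ⟨x, hx, by linarith⟩

theorem exists_critical_isMinOn_sublevel {X : Type*} [NormedAddCommGroup X] [NormedSpace ℝ X]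
    (hrefl : Function.Surjective (inclusionInDoubleDual ℝ X)) {Φ Ψ : X → ℝ}
    {DΦ DΨ : X → X →L[ℝ] ℝ} (hΦG : HasGateauxDeriv Φ DΦ) (hΨG : HasGateauxDeriv Ψ DΨ)
    (hΦlsc : SeqWeaklyLowerSemicontinuous Φ) (hΨlsc : SeqWeaklyLowerSemicontinuous Ψ)
    (hΨcont : Continuous Ψ) (hΨcoer : ∀ M : ℝ, ∃ R : ℝ, ∀ x : X, R ≤ ‖x‖ → M ≤ Ψ x) {c ρ : ℝ}
    (hρ : sInf (range Ψ) < ρ)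
    (hc : sInf ((fun x => (Φ x - sInf (Φ '' weakClosure {y | Ψ y < ρ})) / (ρ - Ψ x)) ''
      {x | Ψ x < ρ}) < c) :
    ∃ x, DΦ x + c • DΨ x = 0 ∧ Ψ x < ρ ∧ ∀ y, Ψ y < ρ → Φ x + c * Ψ x ≤ Φ y + c * Ψ y := by
  set S := {x | Ψ x < ρ}
  set C := weakClosure S
  have hSC := subset_weakClosure S
  obtain ⟨_, ⟨x₀, rfl⟩, hx₀S⟩ := exists_lt_of_csInf_lt (range_nonempty Ψ) hρ
  obtain ⟨R, hR⟩ := hΨcoer ρ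
  have hSR : S ⊆ Metric.closedBall 0 R := fun x hx =>
    mem_closedBall_zero_iff.2 (not_le.1 fun h => (hR x h).not_gt hx).le
  have hCR : ∀ x ∈ C, ‖x‖ ≤ R := fun x hx =>
    mem_closedBall_zero_iff.1 (weakClosure_subset_closedBall hSR hx)
  obtain ⟨mΦ, hmΦ⟩ := hΦlsc.exists_forall_le_of_norm_le hrefl hΦG.continuous_comp_line R
  have hm : ∀ x ∈ C, sInf (Φ '' C) ≤ Φ x := fun x hx =>
    csInf_le ⟨mΦ, forall_mem_image.2 fun y hy => hmΦ y (hCR y hy)⟩ (mem_image_of_mem Φ hx)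
  obtain ⟨hcpos, x₁, hx₁S, hx₁⟩ :=
    exists_add_mul_lt_of_sInf_div_lt ⟨x₀, hx₀S⟩ (fun x hx => hm x (hSC hx)) (fun _ hx => hx) hc
  obtain ⟨x, hxC, hxmin⟩ := exists_isMinOn_add_mul hrefl hΦlsc hΨlsc hΦG.continuous_comp_line
    hΨG.continuous_comp_line hcpos.le ⟨x₀, hSC hx₀S⟩ hCR fun u x hu hux => hux.mem_weakClosure hu
  have hxS : Ψ x < ρ := by
    by_contra! hxρ
    have := isMinOn_iff.1 hxmin x₁ (hSC hx₁S)
    nlinarith [hm x hxC]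
  have hloc : IsLocalMin (fun y => Φ y + c * Ψ y) x :=
    hxmin.isLocalMin (mem_of_superset ((isOpen_lt hΨcont continuous_const).mem_nhds hxS) hSC)
  exact ⟨x, hΦG.add_smul_eq_zero_of_isLocalMin hΨG hloc, hxS,
    fun y hy => isMinOn_iff.1 hxmin y (hSC hy)⟩

theorem stmt_14_general (X : Type*) [NormedAddCommGroup X] [NormedSpace ℝ X]
    (hrefl : Function.Surjective (NormedSpace.inclusionInDoubleDual ℝ X))
    (Φ Ψ : X → ℝ) (DΦ DΨ : X → (X →L[ℝ] ℝ))
    (hΦG : ∀ x h : X, Filter.Tendsto (fun s : ℝ => (Φ (x + s • h) - Φ x) / s)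
      (nhdsWithin 0 {0}ᶜ) (nhds (DΦ x h)))
    (hΨG : ∀ x h : X, Filter.Tendsto (fun s : ℝ => (Ψ (x + s • h) - Ψ x) / s)
      (nhdsWithin 0 {0}ᶜ) (nhds (DΨ x h)))
    (hΦlsc : ∀ (u : ℕ → X) (x : X),
      (∀ L : X →L[ℝ] ℝ, Filter.Tendsto (fun n => L (u n)) Filter.atTop (nhds (L x))) →
      Φ x ≤ Filter.liminf (fun n => Φ (u n)) Filter.atTop)
    (hΨlsc : ∀ (u : ℕ → X) (x : X),
      (∀ L : X →L[ℝ] ℝ, Filter.Tendsto (fun n => L (u n)) Filter.atTop (nhds (L x))) →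
      Ψ x ≤ Filter.liminf (fun n => Ψ (u n)) Filter.atTop)
    (hΨcont : Continuous Ψ)
    (hΨcoer : ∀ M : ℝ, ∃ R : ℝ, ∀ x : X, R ≤ ‖x‖ → M ≤ Ψ x)
    (lam : ℝ) (φ : ℝ → ℝ)
    (hφ : ∀ r : ℝ, φ r = sInf ((fun x : X =>
      (Φ x - sInf (Φ '' (toWeakSpace ℝ X ⁻¹'
        closure (toWeakSpace ℝ X '' {y : X | Ψ y < r})))) / (r - Ψ x)) '' {x : X | Ψ x < r}))
    (r : ℕ → ℝ)
    (hrinf : ∀ n, sInf (Set.range Ψ) < r n)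
    (hrtop : Filter.Tendsto r Filter.atTop Filter.atTop)
    (hφr : ∀ n, φ (r n) < lam) :
    (∃ x : X, ∀ y : X, Φ x + lam * Ψ x ≤ Φ y + lam * Ψ y) ∨
    (∃ u : ℕ → X, (∀ n, DΦ (u n) + lam • DΨ (u n) = 0) ∧
      Filter.Tendsto (fun n => Ψ (u n)) Filter.atTop Filter.atTop) := by
  choose u hucrit _ humin using fun n => exists_critical_isMinOn_sublevel hrefl hΦG hΨG hΦlsc
    hΨlsc hΨcont hΨcoer (hrinf n) ((hφ (r n)).symm.trans_lt (hφr n))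
  by_cases hbdd : BddAbove (range fun n => Ψ (u n))
  · obtain ⟨M, hM⟩ := hbdd
    obtain ⟨m, hm⟩ := (hrtop.eventually_gt_atTop M).exists
    refine Or.inl ⟨u m, fun y => ?_⟩
    obtain ⟨n, hn⟩ := (hrtop.eventually_gt_atTop (Ψ y)).exists
    exact (humin m _ ((hM (mem_range_self n)).trans_lt hm)).trans (humin n y hn)
  · choose k hk using fun j : ℕ => by simpa using not_bddAbove_iff.1 hbdd j
    exact Or.inr ⟨u ∘ k, fun j => hucrit (k j),
      tendsto_atTop_mono (fun j => (hk j).le) tendsto_natCast_atTop_atTop⟩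

/-- Ricceri-type variational principle, part 1. `X` is a reflexive real
Banach space (reflexivity expressed as surjectivity of the canonical inclusion into the
double dual); `Φ, Ψ : X → ℝ` are sequentially weakly lower semicontinuous and Gâteaux
differentiable with Gâteaux derivatives `DΦ, DΨ`; `Ψ` is continuous and coercive. With
`φ(r) = inf_{Ψ(x)<r} (Φ(x) - inf_{weak closure of {Ψ<r}} Φ)/(r - Ψ(x))`, if `rₙ → +∞`
and `φ(rₙ) < λ` for all `n`, then either `Φ + λΨ` has a global minimum, or there is a
sequence of critical points `xₙ` of `Φ + λΨ` with `Ψ(xₙ) → +∞`. -/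
theorem stmt_14 (X : Type*) [NormedAddCommGroup X] [NormedSpace ℝ X] [CompleteSpace X]
    (hrefl : Function.Surjective (NormedSpace.inclusionInDoubleDual ℝ X))
    (Φ Ψ : X → ℝ) (DΦ DΨ : X → (X →L[ℝ] ℝ))
    (hΦG : ∀ x h : X, Filter.Tendsto (fun s : ℝ => (Φ (x + s • h) - Φ x) / s)
      (nhdsWithin 0 {0}ᶜ) (nhds (DΦ x h)))
    (hΨG : ∀ x h : X, Filter.Tendsto (fun s : ℝ => (Ψ (x + s • h) - Ψ x) / s)
      (nhdsWithin 0 {0}ᶜ) (nhds (DΨ x h)))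
    (hΦlsc : ∀ (u : ℕ → X) (x : X),
      (∀ L : X →L[ℝ] ℝ, Filter.Tendsto (fun n => L (u n)) Filter.atTop (nhds (L x))) →
      Φ x ≤ Filter.liminf (fun n => Φ (u n)) Filter.atTop)
    (hΨlsc : ∀ (u : ℕ → X) (x : X),
      (∀ L : X →L[ℝ] ℝ, Filter.Tendsto (fun n => L (u n)) Filter.atTop (nhds (L x))) →
      Ψ x ≤ Filter.liminf (fun n => Ψ (u n)) Filter.atTop)
    (hΨcont : Continuous Ψ)
    (hΨcoer : ∀ M : ℝ, ∃ R : ℝ, ∀ x : X, R ≤ ‖x‖ → M ≤ Ψ x)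
    (lam : ℝ) (φ : ℝ → ℝ)
    (hφ : ∀ r : ℝ, φ r = sInf ((fun x : X =>
      (Φ x - sInf (Φ '' (toWeakSpace ℝ X ⁻¹'
        closure (toWeakSpace ℝ X '' {y : X | Ψ y < r})))) / (r - Ψ x)) '' {x : X | Ψ x < r}))
    (r : ℕ → ℝ)
    (hrinf : ∀ n, sInf (Set.range Ψ) < r n)
    (hrtop : Filter.Tendsto r Filter.atTop Filter.atTop)
    (hφr : ∀ n, φ (r n) < lam) :
    (∃ x : X, ∀ y : X, Φ x + lam * Ψ x ≤ Φ y + lam * Ψ y) ∨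
    (∃ u : ℕ → X, (∀ n, DΦ (u n) + lam • DΨ (u n) = 0) ∧
      Filter.Tendsto (fun n => Ψ (u n)) Filter.atTop Filter.atTop) :=
  stmt_14_general X hrefl Φ Ψ DΦ DΨ hΦG hΨG hΦlsc hΨlsc hΨcont hΨcoer lam φ hφ r hrinf hrtop hφr
end
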